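/- Let G be a paratopological gyrogroup and γ a family of open neighborhoods of 0 satisfying: (a) for each U ∈ γ there is V ∈ γ with V⊕V ⊆ U; (b) for each U ∈ γ and x,y ∈ G there is V ∈ γ with gyr[x,y](V) ⊆ U; (c) γ is subordinated to each U ∈ γ; (d) ⋂_{V∈γ}(⊖V) ⊆ U for all U ∈ γ. Then N = ⋂_{U∈γ} U equals ⋂_{U∈γ}(U ∩ ⊖U) and is an invariant (normal) subgyrogroup of G. -/

import Mathlib

open Pointwise

/-- A gyrogroup: a groupoid with identity, inverses, gyroautomorphisms satisfying
the left gyroassociative law and the left loop property. -/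
class Gyrogroup (G : Type*) extends Zero G, Neg G, Add G where
  zero_add : ∀ a : G, 0 + a = a
  add_zero : ∀ a : G, a + 0 = a
  neg_add_cancel : ∀ a : G, -a + a = 0
  add_neg_cancel : ∀ a : G, a + -a = 0
  gyr : G → G → G → G
  gyr_bijective : ∀ a b : G, Function.Bijective (gyr a b)
  gyr_add : ∀ a b x y : G, gyr a b (x + y) = gyr a b x + gyr a b y
  gyrassoc : ∀ a b c : G, a + (b + c) = a + b + gyr a b c
  loop : ∀ a b : G, gyr (a + b) b = gyr a b

/-- A family γ of neighborhoods of 0 is subordinated to U if for all x, y there are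
members V₁, V₂ of γ with ⊖(x⊕y)⊕((V₁⊕x)⊕y) ⊆ U and V₂ ⊆ ⊖(x⊕y)⊕((U⊕x)⊕y). -/
def Subordinated {G : Type*} [Add G] [Neg G] (γ : Set (Set G)) (U : Set G) : Prop :=
  (∀ x y : G, ∃ V ∈ γ, {-(x + y)} + ((V + {x}) + {y}) ⊆ U) ∧
  (∀ x y : G, ∃ V ∈ γ, V ⊆ {-(x + y)} + ((U + {x}) + {y}))

/-- A paratopological gyrogroup is ω-balanced if every neighborhood of the identity
has a countable subordinated family of open neighborhoods of the identity. -/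
def OmegaBalanced (G : Type*) [Add G] [Neg G] [Zero G] [TopologicalSpace G] : Prop :=
  ∀ U ∈ nhds (0 : G), ∃ γ : Set (Set G), γ.Countable ∧
    (∀ V ∈ γ, IsOpen V ∧ (0 : G) ∈ V) ∧ Subordinated γ U

/-!
Write `N = ⋂₀ γ`. Condition (a) gives `N ⊕ N ⊆ N`, (b) gives `gyr[a,b](N) ⊆ N`, and (d) says
`⊖N ⊆ N`, which yields both closure under `⊖` and `N = ⋂ (U ∩ ⊖U)`. For invariance let
`f x = ⊖(a⊕b)⊕((x⊕a)⊕b)`. The first half of (c) gives `f(N) ⊆ N`; the second says that each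
`f(U)` contains a member of `γ`, hence contains `N`, so `N ⊆ ⋂ f(U) = f(N)` because `f` is a
bijection of `G`. Injectivity of `f` comes from the two cancellation laws, surjectivity from
solving `m ⊕ a = c`, which follows from the left Bol identity.
-/

namespace Gyrogroup

variable {G : Type*} [Gyrogroup G]

theorem neg_add_add_eq_gyr_neg (a x : G) : -a + (a + x) = gyr (-a) a x := by
  rw [gyrassoc, neg_add_cancel, zero_add]

theorem add_left_cancel {a x y : G} (h : a + x = a + y) : x = y :=
  (gyr_bijective (-a) a).injective <| by
    rw [← neg_add_add_eq_gyr_neg, ← neg_add_add_eq_gyr_neg, h]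

theorem gyr_zero_left (a x : G) : gyr 0 a x = x := by
  refine add_left_cancel (a := a) ?_
  simpa only [zero_add] using (gyrassoc 0 a x).symm

theorem neg_add_cancel_left (a x : G) : -a + (a + x) = x := by
  rw [neg_add_add_eq_gyr_neg, ← loop, neg_add_cancel, gyr_zero_left]

theorem add_neg_cancel_left (a x : G) : a + (-a + x) = x := by
  rw [gyrassoc, add_neg_cancel, zero_add, ← loop, add_neg_cancel, gyr_zero_left]

instance : InvolutiveNeg G where
  neg_neg a := add_left_cancel (a := -a) (by rw [add_neg_cancel, neg_add_cancel])

theorem add_right_cancel {a x y : G} (h : x + a = y + a) : x = y := by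
  have key : ∀ t : G, (t + a) + gyr (t + a) a (-a) = t := fun t => by
    rw [loop, ← gyrassoc, add_neg_cancel, add_zero]
  rw [← key x, ← key y, h]

theorem neg_add_add_add_eq_gyr (a b x : G) : -(a + b) + (a + (b + x)) = gyr a b x := by
  rw [gyrassoc a b x, neg_add_cancel_left]

theorem neg_add_add_neg_add_add (a d x : G) :
    -(d + (-a + d)) + (d + x) = -d + (a + x) := by
  have hloop : gyr d (-a + d) = gyr a (-a + d) := by
    rw [← loop a, add_neg_cancel_left]
  have h := neg_add_add_add_eq_gyr d (-a + d) (-(-a + d) + x)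
  rw [hloop, ← neg_add_add_add_eq_gyr a (-a + d), add_neg_cancel_left, add_neg_cancel_left] at h
  exact h

theorem left_bol (d e x : G) : (d + (e + d)) + x = d + (e + (d + x)) := by
  have h := neg_add_add_neg_add_add (-e) d (e + (d + x))
  rw [_root_.neg_neg, neg_add_cancel_left, neg_add_cancel_left] at h
  calc (d + (e + d)) + x
      = (d + (e + d)) + (-(d + (e + d)) + (d + (e + (d + x)))) := by rw [h]
    _ = d + (e + (d + x)) := add_neg_cancel_left _ _

theorem exists_add_eq (a c : G) : ∃ m, m + a = c :=
  ⟨-a + ((a + c) + -a), by rw [left_bol, neg_add_cancel, add_zero, neg_add_cancel_left]⟩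

def conj (a b x : G) : G := -(a + b) + ((x + a) + b)

theorem image_conj (a b : G) (S : Set G) :
    conj a b '' S = {-(a + b)} + ((S + {a}) + {b}) := by
  simp only [Set.singleton_add, Set.add_singleton, Set.image_image]
  rfl

theorem conj_bijective (a b : G) : Function.Bijective (conj a b) := by
  refine ⟨fun x y h => add_right_cancel (add_right_cancel (add_left_cancel h)), fun x => ?_⟩
  obtain ⟨m₁, hm₁⟩ := exists_add_eq b ((a + b) + x)
  obtain ⟨m, hm⟩ := exists_add_eq a m₁
  exact ⟨m, by rw [conj, hm, hm₁, neg_add_cancel_left]⟩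

end Gyrogroup

section SetFamily

variable {α : Type*} {γ : Set (Set α)}

theorem add_mem_sInter_of_forall_exists_add_subset [Add α]
    (h : ∀ U ∈ γ, ∃ V ∈ γ, V + V ⊆ U) {a b : α} (ha : a ∈ ⋂₀ γ) (hb : b ∈ ⋂₀ γ) :
    a + b ∈ ⋂₀ γ := fun U hU =>
  let ⟨V, hV, hVU⟩ := h U hU
  hVU (Set.add_mem_add (ha V hV) (hb V hV))

theorem neg_sInter_subset_sInter [Neg α] (h : ∀ U ∈ γ, (⋂ V ∈ γ, -V) ⊆ U) :
    -⋂₀ γ ⊆ ⋂₀ γ := by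
  rw [Set.sInter_neg]
  exact Set.subset_sInter h

theorem sInter_eq_iInter_inter_neg [InvolutiveNeg α] (h : -⋂₀ γ ⊆ ⋂₀ γ) :
    ⋂₀ γ = ⋂ U ∈ γ, (U ∩ -U) := by
  ext x
  simp only [Set.mem_sInter, Set.mem_iInter, Set.mem_inter_iff]
  exact ⟨fun hx U hU => ⟨hx U hU, h (Set.neg_mem_neg.mpr hx) U hU⟩, fun hx U hU => (hx U hU).1⟩

theorem image_sInter_subset_sInter {f : α → α} (h : ∀ U ∈ γ, ∃ V ∈ γ, f '' V ⊆ U) :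
    f '' ⋂₀ γ ⊆ ⋂₀ γ := fun _ ⟨x, hx, hfx⟩ U hU =>
  let ⟨V, hV, hVU⟩ := h U hU
  hVU ⟨x, hx V hV, hfx⟩

theorem image_sInter_eq_sInter {f : α → α} (hf : Function.Bijective f)
    (h₁ : ∀ U ∈ γ, ∃ V ∈ γ, f '' V ⊆ U) (h₂ : ∀ U ∈ γ, ∃ V ∈ γ, V ⊆ f '' U) :
    f '' ⋂₀ γ = ⋂₀ γ := by
  refine (image_sInter_subset_sInter h₁).antisymm fun y hy => ?_
  obtain ⟨x, rfl⟩ := hf.surjective y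
  refine ⟨x, fun U hU => ?_, rfl⟩
  obtain ⟨V, hV, hVU⟩ := h₂ U hU
  obtain ⟨u, hu, hux⟩ := hVU (hy V hV)
  rwa [← hf.injective hux]

end SetFamily

open Gyrogroup in
theorem invariant_subgyrogroup_of_family_general {G : Type*} [Gyrogroup G] [TopologicalSpace G]
    (γ : Set (Set G))
    (hnbhd : ∀ V ∈ γ, IsOpen V ∧ (0 : G) ∈ V)
    (ha : ∀ U ∈ γ, ∃ V ∈ γ, V + V ⊆ U)
    (hb : ∀ U ∈ γ, ∀ x y : G, ∃ V ∈ γ, Gyrogroup.gyr x y '' V ⊆ U)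
    (hc : ∀ U ∈ γ, Subordinated γ U)
    (hd : ∀ U ∈ γ, (⋂ V ∈ γ, -V) ⊆ U) :
    (⋂₀ γ = ⋂ U ∈ γ, (U ∩ -U)) ∧
    ((0 : G) ∈ ⋂₀ γ) ∧
    (∀ a b : G, a ∈ ⋂₀ γ → b ∈ ⋂₀ γ → a + b ∈ ⋂₀ γ) ∧
    (∀ a : G, a ∈ ⋂₀ γ → -a ∈ ⋂₀ γ) ∧
    (∀ a b : G, Gyrogroup.gyr a b '' ⋂₀ γ ⊆ ⋂₀ γ) ∧
    (∀ a b : G, {-(a + b)} + ((⋂₀ γ + {a}) + {b}) = ⋂₀ γ) := by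
  have hneg := neg_sInter_subset_sInter hd
  refine ⟨sInter_eq_iInter_inter_neg hneg, fun U hU => (hnbhd U hU).2,
    fun a b => add_mem_sInter_of_forall_exists_add_subset ha,
    fun a h => hneg (Set.neg_mem_neg.mpr h),
    fun a b => image_sInter_subset_sInter fun U hU => hb U hU a b, fun a b => ?_⟩
  rw [← image_conj]
  refine image_sInter_eq_sInter (conj_bijective a b) (fun U hU => ?_) (fun U hU => ?_)
  · simpa only [image_conj] using (hc U hU).1 a b
  · simpa only [image_conj] using (hc U hU).2 a b

/-- If a family γ of open neighborhoods of 0 in a paratopological gyrogroup satisfies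
(a)-(d), then N = ⋂γ equals ⋂_{U∈γ}(U ∩ ⊖U) and is an invariant (normal) subgyrogroup:
it contains 0, is closed under ⊕, ⊖, and all gyr[a,b], and satisfies
⊖(a⊕b)⊕((N⊕a)⊕b) = N for all a, b. -/
theorem invariant_subgyrogroup_of_family {G : Type*} [Gyrogroup G] [TopologicalSpace G]
    [ContinuousAdd G] (γ : Set (Set G))
    (hnbhd : ∀ V ∈ γ, IsOpen V ∧ (0 : G) ∈ V)
    (ha : ∀ U ∈ γ, ∃ V ∈ γ, V + V ⊆ U)
    (hb : ∀ U ∈ γ, ∀ x y : G, ∃ V ∈ γ, Gyrogroup.gyr x y '' V ⊆ U)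
    (hc : ∀ U ∈ γ, Subordinated γ U)
    (hd : ∀ U ∈ γ, (⋂ V ∈ γ, -V) ⊆ U) :
    (⋂₀ γ = ⋂ U ∈ γ, (U ∩ -U)) ∧
    ((0 : G) ∈ ⋂₀ γ) ∧
    (∀ a b : G, a ∈ ⋂₀ γ → b ∈ ⋂₀ γ → a + b ∈ ⋂₀ γ) ∧
    (∀ a : G, a ∈ ⋂₀ γ → -a ∈ ⋂₀ γ) ∧
    (∀ a b : G, Gyrogroup.gyr a b '' ⋂₀ γ ⊆ ⋂₀ γ) ∧
    (∀ a b : G, {-(a + b)} + ((⋂₀ γ + {a}) + {b}) = ⋂₀ γ) :=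
  invariant_subgyrogroup_of_family_general γ hnbhd ha hb hc hd
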